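/- The subset H of G_n defined by x_1 = 0 is an abelian normal subgroup of G_n, and the quotient G_n/H is isomorphic to (ℂ, +). -/
import Mathlib

set_option maxHeartbeats 1000000

open Matrix

/-- The matrix of the group `G_n` with parameters `x 1, …, x n, y 1, …, y n`
(1-indexed; values of `x`, `y` outside `{1, …, n}` are irrelevant). -/
noncomputable def Gmat (n : ℕ) (x y : ℕ → ℂ) : Matrix (Fin (n+3)) (Fin (n+3)) ℂ :=
  Matrix.of fun i j : Fin (n+3) =>
    if (i : ℕ) = (j : ℕ) then 1
    else if (j : ℕ) = n ∧ (i : ℕ) + 2 ≤ n then -(starRingEnd ℂ) (x (n - 1 - (i : ℕ)))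
    else if (j : ℕ) = n + 1 ∧ (i : ℕ) + 1 = n then -(starRingEnd ℂ) (x 1)
    else if (j : ℕ) = n + 1 ∧ (i : ℕ) + 2 ≤ n then x (n - (i : ℕ))
    else if (j : ℕ) = n + 2 ∧ (i : ℕ) + 1 ≤ n then y (n - (i : ℕ))
    else if (j : ℕ) = n + 2 ∧ ((i : ℕ) = n ∨ (i : ℕ) = n + 1) then x 1
    else 0

/-- The set of matrices of the group `G_n`. -/
def GnSet (n : ℕ) : Set (Matrix (Fin (n+3)) (Fin (n+3)) ℂ) :=
  {A | ∃ x y : ℕ → ℂ, A = Gmat n x y}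

/-- The subset of `G_n` where the parameter `x 1` vanishes. -/
def HnSet (n : ℕ) : Set (Matrix (Fin (n+3)) (Fin (n+3)) ℂ) :=
  {A | ∃ x y : ℕ → ℂ, x 1 = 0 ∧ A = Gmat n x y}

/-! ### Auxiliary machinery -/

noncomputable def Nmat (n : ℕ) (x y : ℕ → ℂ) : Matrix (Fin (n+3)) (Fin (n+3)) ℂ :=
  Matrix.of fun i j : Fin (n+3) =>
    if (j : ℕ) = n ∧ (i : ℕ) + 2 ≤ n then -(starRingEnd ℂ) (x (n - 1 - (i : ℕ)))
    else if (j : ℕ) = n + 1 ∧ (i : ℕ) + 1 = n then -(starRingEnd ℂ) (x 1)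
    else if (j : ℕ) = n + 1 ∧ (i : ℕ) + 2 ≤ n then x (n - (i : ℕ))
    else if (j : ℕ) = n + 2 ∧ (i : ℕ) + 1 ≤ n then y (n - (i : ℕ))
    else if (j : ℕ) = n + 2 ∧ ((i : ℕ) = n ∨ (i : ℕ) = n + 1) then x 1
    else 0

lemma Gmat_decomp (n : ℕ) (x y : ℕ → ℂ) : Gmat n x y = 1 + Nmat n x y := by
  ext i j
  simp only [Gmat, Nmat, Matrix.add_apply, Matrix.one_apply, Matrix.of_apply, Fin.ext_iff]
  by_cases h : (i : ℕ) = (j : ℕ)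
  · rw [if_pos h, if_pos h]
    have hi := i.isLt
    split_ifs <;> first | (exfalso; omega) | ring
  · rw [if_neg h, if_neg h, zero_add]

lemma Nmat_add (n : ℕ) (x y x' y' : ℕ → ℂ) :
    Nmat n x y + Nmat n x' y' = Nmat n (fun k => x k + x' k) (fun k => y k + y' k) := by
  ext i j
  simp only [Nmat, Matrix.add_apply, Matrix.of_apply]
  split_ifs <;> simp [map_add] <;> ring

noncomputable def cfun (x : ℕ → ℂ) (k : ℕ) : ℂ :=
  if k = 1 then -(starRingEnd ℂ) (x 1) else x k - (starRingEnd ℂ) (x (k-1))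

lemma Nmat_mul (n : ℕ) (hn : 2 ≤ n) (x y x' y' : ℕ → ℂ) :
    Nmat n x y * Nmat n x' y' = Nmat n 0 (fun k => cfun x k * x' 1) := by
  ext i j
  rw [Matrix.mul_apply]
  have hi := i.isLt
  have hj := j.isLt
  obtain ⟨a, haa⟩ : ∃ a : Fin (n+3), (a:ℕ) = n := ⟨⟨n, by omega⟩, rfl⟩
  obtain ⟨b, hbb⟩ : ∃ b : Fin (n+3), (b:ℕ) = n + 1 := ⟨⟨n+1, by omega⟩, rfl⟩
  have hab : a ≠ b := by intro h; rw [h, hbb] at haa; omega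
  have key : ∀ k : Fin (n+3), Nmat n x y i k * Nmat n x' y' k j =
      (if k = a then Nmat n x y i a * Nmat n x' y' a j else 0) +
      (if k = b then Nmat n x y i b * Nmat n x' y' b j else 0) := by
    intro k
    by_cases hka : k = a
    · subst hka; rw [if_pos rfl, if_neg hab, add_zero]
    · rw [if_neg hka]
      by_cases hkb : k = b
      · subst hkb; rw [if_pos rfl, zero_add]
      · rw [if_neg hkb, add_zero]
        have hk := k.isLt
        have hk' : (k : ℕ) ≠ n := fun h => hka (Fin.ext (h.trans haa.symm))
        have hk'' : (k : ℕ) ≠ n + 1 := fun h => hkb (Fin.ext (h.trans hbb.symm))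
        rcases lt_or_ge (k : ℕ) n with hlt | hge
        · have h0 : Nmat n x y i k = 0 := by
            simp only [Nmat, Matrix.of_apply]
            split_ifs <;> first | rfl | (exfalso; omega)
          rw [h0, zero_mul]
        · have hk2 : (k : ℕ) = n + 2 := by omega
          have h0 : Nmat n x' y' k j = 0 := by
            simp only [Nmat, Matrix.of_apply, hk2]
            split_ifs <;> first | rfl | (exfalso; omega)
          rw [h0, mul_zero]
  rw [Finset.sum_congr rfl (fun k _ => key k), Finset.sum_add_distrib,
    Finset.sum_ite_eq' Finset.univ a, Finset.sum_ite_eq' Finset.univ b]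
  simp only [Finset.mem_univ, if_true]
  have hNaj : Nmat n x' y' a j = if (j : ℕ) = n + 2 then x' 1 else 0 := by
    simp only [Nmat, Matrix.of_apply, haa]
    split_ifs <;> first | rfl | (exfalso; omega) | (exfalso; simp_all; done) | (exfalso; simp_all; omega)
  have hNbj : Nmat n x' y' b j = if (j : ℕ) = n + 2 then x' 1 else 0 := by
    simp only [Nmat, Matrix.of_apply, hbb]
    split_ifs <;> first | rfl | (exfalso; omega) | (exfalso; simp_all; done) | (exfalso; simp_all; omega)
  have hNia : Nmat n x y i a = if (i : ℕ) + 2 ≤ n then -(starRingEnd ℂ) (x (n - 1 - (i:ℕ))) else 0 := by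
    simp only [Nmat, Matrix.of_apply, haa]
    split_ifs <;> first | rfl | (exfalso; omega) | (exfalso; simp_all; done) | (exfalso; simp_all; omega)
  have hNib : Nmat n x y i b =
      if (i : ℕ) + 1 = n then -(starRingEnd ℂ) (x 1)
      else if (i : ℕ) + 2 ≤ n then x (n - (i:ℕ)) else 0 := by
    simp only [Nmat, Matrix.of_apply, hbb]
    split_ifs <;> first | rfl | (exfalso; omega) | (exfalso; simp_all; done) | (exfalso; simp_all; omega)
  rw [hNaj, hNbj, hNia, hNib]
  simp only [Nmat, Matrix.of_apply, cfun, Pi.zero_apply]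
  have hsub : n - (i:ℕ) - 1 = n - 1 - (i:ℕ) := by omega
  split_ifs <;> first | (exfalso; omega) | (simp; done) | (rw [hsub]; ring) | ring1 | (exfalso; simp_all; done) | (exfalso; simp_all; omega)

lemma Gmat_param_congr {n : ℕ} {p q p' q' : ℕ → ℂ} (hp : ∀ k, p k = p' k)
    (hq : ∀ k, q k = q' k) : Gmat n p q = Gmat n p' q' := by
  rw [funext hp, funext hq]

lemma Gmat_param_congr_N {n : ℕ} {p q p' q' : ℕ → ℂ} (hp : ∀ k, p k = p' k)
    (hq : ∀ k, q k = q' k) : Nmat n p q = Nmat n p' q' := by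
  rw [funext hp, funext hq]

lemma Gmat_one (n : ℕ) : Gmat n (fun _ => 0) (fun _ => 0) = 1 := by
  ext i j
  simp only [Gmat, Matrix.of_apply, Matrix.one_apply]
  by_cases h : (i:ℕ) = (j:ℕ)
  · rw [if_pos h, if_pos (Fin.ext h)]
  · rw [if_neg h, if_neg (fun hh => h (congrArg Fin.val hh))]
    split_ifs <;> simp

lemma Gmat_mul (n : ℕ) (hn : 2 ≤ n) (x y x' y' : ℕ → ℂ) :
    Gmat n x y * Gmat n x' y' =
      Gmat n (fun k => x k + x' k) (fun k => y k + y' k + cfun x k * x' 1) := by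
  rw [Gmat_decomp n x y, Gmat_decomp n x' y',
    Gmat_decomp n (fun k => x k + x' k) (fun k => y k + y' k + cfun x k * x' 1)]
  rw [add_mul, one_mul, mul_add, mul_one, Nmat_mul n hn]
  have e : (1 + Nmat n x' y') + (Nmat n x y + Nmat n 0 (fun k => cfun x k * x' 1)) =
      1 + ((Nmat n x y + Nmat n x' y') + Nmat n 0 (fun k => cfun x k * x' 1)) := by abel
  rw [e, Nmat_add, Nmat_add]
  refine congrArg (1 + ·) (Gmat_param_congr_N ?_ ?_)
  · intro k; show x k + x' k + 0 = x k + x' k; ring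
  · intro k; rfl

lemma Gmat_mul_inv (n : ℕ) (hn : 2 ≤ n) (x y : ℕ → ℂ) :
    Gmat n x y * Gmat n (fun k => -x k) (fun k => -y k + cfun x k * x 1) = 1 := by
  rw [Gmat_mul n hn]
  refine Eq.trans (Gmat_param_congr (p' := fun _ => 0) (q' := fun _ => 0) ?_ ?_) (Gmat_one n)
  · intro k; show x k + -x k = 0; ring
  · intro k; show y k + (-y k + cfun x k * x 1) + cfun x k * (-x 1) = 0; ring

lemma Gmat_inv_val (n : ℕ) (hn : 2 ≤ n) (g : GL (Fin (n+3)) ℂ) (x y : ℕ → ℂ)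
    (hg : (↑g : Matrix (Fin (n+3)) (Fin (n+3)) ℂ) = Gmat n x y) :
    (↑(g⁻¹) : Matrix (Fin (n+3)) (Fin (n+3)) ℂ) =
      Gmat n (fun k => -x k) (fun k => -y k + cfun x k * x 1) := by
  have h1 : (↑g : Matrix (Fin (n+3)) (Fin (n+3)) ℂ) *
      Gmat n (fun k => -x k) (fun k => -y k + cfun x k * x 1) = 1 := by
    rw [hg]; exact Gmat_mul_inv n hn x y
  calc (↑(g⁻¹) : Matrix (Fin (n+3)) (Fin (n+3)) ℂ)
      = ↑(g⁻¹) * ((↑g : Matrix (Fin (n+3)) (Fin (n+3)) ℂ) *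
        Gmat n (fun k => -x k) (fun k => -y k + cfun x k * x 1)) := by rw [h1, mul_one]
    _ = (↑(g⁻¹) * (↑g : Matrix (Fin (n+3)) (Fin (n+3)) ℂ)) *
        Gmat n (fun k => -x k) (fun k => -y k + cfun x k * x 1) := by rw [mul_assoc]
    _ = Gmat n (fun k => -x k) (fun k => -y k + cfun x k * x 1) := by
        rw [Units.inv_mul, one_mul]

lemma Gmat_x1 (n : ℕ) (x y : ℕ → ℂ) (a c : Fin (n+3)) (ha : (a:ℕ) = n) (hc : (c:ℕ) = n+2) :
    Gmat n x y a c = x 1 := by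
  simp only [Gmat, Matrix.of_apply, ha, hc]
  split_ifs <;> first | rfl | (exfalso; omega) | (exfalso; simp_all; done) | (exfalso; simp_all; omega)

noncomputable def Gunit (n : ℕ) (hn : 2 ≤ n) (x y : ℕ → ℂ) : GL (Fin (n+3)) ℂ :=
  ⟨Gmat n x y, Gmat n (fun k => -x k) (fun k => -y k + cfun x k * x 1),
   Gmat_mul_inv n hn x y, mul_eq_one_comm.mp (Gmat_mul_inv n hn x y)⟩

/-- the subset `H = {x 1 = 0}` of `G_n` is an abelian normal subgroup
and the quotient `G_n / H` is isomorphic to `(ℂ, +)`. -/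
theorem Gn_H_abelian_normal_quotient (n : ℕ) (hn : 2 ≤ n) :
    ∃ G H : Subgroup (GL (Fin (n+3)) ℂ),
      (G : Set (GL (Fin (n+3)) ℂ)) = {g : GL (Fin (n+3)) ℂ | ↑g ∈ GnSet n} ∧
      (H : Set (GL (Fin (n+3)) ℂ)) = {g : GL (Fin (n+3)) ℂ | ↑g ∈ HnSet n} ∧
      H ≤ G ∧
      (∀ a ∈ H, ∀ b ∈ H, a * b = b * a) ∧
      (∀ g ∈ G, ∀ h ∈ H, g * h * g⁻¹ ∈ H) ∧
      ∃ ψ : G →* Multiplicative ℂ,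
        Function.Surjective ψ ∧
        (MonoidHom.ker ψ : Set G) = {g : G | (↑(↑g : GL (Fin (n+3)) ℂ) :
          Matrix (Fin (n+3)) (Fin (n+3)) ℂ) ∈ HnSet n} := by
  classical
  set G : Subgroup (GL (Fin (n+3)) ℂ) :=
    { carrier := {g : GL (Fin (n+3)) ℂ | ↑g ∈ GnSet n}
      mul_mem' := by
        rintro a b ⟨x, y, hx⟩ ⟨x', y', hx'⟩
        exact ⟨_, _, by rw [Units.val_mul, hx, hx', Gmat_mul n hn]⟩
      one_mem' := ⟨fun _ => 0, fun _ => 0, by rw [Units.val_one, Gmat_one n]⟩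
      inv_mem' := by
        rintro a ⟨x, y, hx⟩
        exact ⟨_, _, Gmat_inv_val n hn a x y hx⟩ } with hGdef
  set H : Subgroup (GL (Fin (n+3)) ℂ) :=
    { carrier := {g : GL (Fin (n+3)) ℂ | ↑g ∈ HnSet n}
      mul_mem' := by
        rintro a b ⟨x, y, h1, hx⟩ ⟨x', y', h1', hx'⟩
        refine ⟨_, _, ?_, by rw [Units.val_mul, hx, hx', Gmat_mul n hn]⟩
        simp [h1, h1']
      one_mem' := ⟨fun _ => 0, fun _ => 0, rfl, by rw [Units.val_one, Gmat_one n]⟩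
      inv_mem' := by
        rintro a ⟨x, y, h1, hx⟩
        refine ⟨_, _, ?_, Gmat_inv_val n hn a x y hx⟩
        simp [h1] } with hHdef
  refine ⟨G, H, rfl, rfl, ?_, ?_, ?_, ?_⟩
  · rintro g ⟨x, y, h1, hx⟩
    exact ⟨x, y, hx⟩
  · rintro a ⟨x, y, h1, hx⟩ b ⟨x', y', h1', hx'⟩
    apply Units.ext
    rw [Units.val_mul, Units.val_mul, hx, hx', Gmat_mul n hn, Gmat_mul n hn]
    refine Gmat_param_congr ?_ ?_
    · intro k; show x k + x' k = x' k + x k; ring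
    · intro k; show y k + y' k + cfun x k * x' 1 = y' k + y k + cfun x' k * x 1
      rw [h1, h1']; ring
  · rintro g ⟨x, y, hg⟩ h ⟨x', y', h1', hh⟩
    refine ⟨_, _, ?_, by
      rw [Units.val_mul, Units.val_mul, hg, hh, Gmat_inv_val n hn g x y hg,
        Gmat_mul n hn, Gmat_mul n hn]⟩
    show x 1 + x' 1 + -x 1 = 0
    rw [h1']; ring
  · obtain ⟨a, haa⟩ : ∃ a : Fin (n+3), (a:ℕ) = n := ⟨⟨n, by omega⟩, rfl⟩
    obtain ⟨c, hcc⟩ : ∃ c : Fin (n+3), (c:ℕ) = n + 2 := ⟨⟨n+2, by omega⟩, rfl⟩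
    have hmul : ∀ u v : G, ((↑(↑(u * v) : GL (Fin (n+3)) ℂ) :
        Matrix (Fin (n+3)) (Fin (n+3)) ℂ)) a c =
        (↑(↑u : GL (Fin (n+3)) ℂ) : Matrix (Fin (n+3)) (Fin (n+3)) ℂ) a c +
        (↑(↑v : GL (Fin (n+3)) ℂ) : Matrix (Fin (n+3)) (Fin (n+3)) ℂ) a c := by
      rintro ⟨u, x, y, hu⟩ ⟨v, x', y', hv⟩
      show ((↑(u * v) : Matrix (Fin (n+3)) (Fin (n+3)) ℂ)) a c = _
      rw [Units.val_mul, hu, hv, Gmat_mul n hn, Gmat_x1 n _ _ a c haa hcc,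
        Gmat_x1 n _ _ a c haa hcc, Gmat_x1 n _ _ a c haa hcc]
    refine ⟨MonoidHom.mk' (fun g => Multiplicative.ofAdd
      ((↑(↑g : GL (Fin (n+3)) ℂ) : Matrix (Fin (n+3)) (Fin (n+3)) ℂ) a c))
      (fun u v => by simp only [hmul u v]; rfl), ?_, ?_⟩
    · intro t
      refine ⟨⟨Gunit n hn (fun _ => t.toAdd) (fun _ => 0), ⟨fun _ => t.toAdd, fun _ => 0, rfl⟩⟩, ?_⟩
      show Multiplicative.ofAdd _ = t
      have : ((Gunit n hn (fun _ => t.toAdd) (fun _ => 0) : GL (Fin (n+3)) ℂ) :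
          Matrix (Fin (n+3)) (Fin (n+3)) ℂ) = Gmat n (fun _ => t.toAdd) (fun _ => 0) := rfl
      rw [this, Gmat_x1 n _ _ a c haa hcc]
      rfl
    · ext g
      have hg2 : (↑(↑g : GL (Fin (n+3)) ℂ) : Matrix (Fin (n+3)) (Fin (n+3)) ℂ) ∈ GnSet n := g.2
      obtain ⟨x, y, hg⟩ := hg2
      simp only [MonoidHom.coe_ker, Set.mem_preimage, Set.mem_setOf_eq, SetLike.mem_coe,
        MonoidHom.mem_ker, MonoidHom.mk'_apply]
      constructor
      · intro hk
        have h0 : (↑(↑g : GL (Fin (n+3)) ℂ) : Matrix (Fin (n+3)) (Fin (n+3)) ℂ) a c = 0 := by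
          have := congrArg Multiplicative.toAdd hk
          simpa using this
        rw [hg, Gmat_x1 n _ _ a c haa hcc] at h0
        exact ⟨x, y, h0, hg⟩
      · rintro ⟨x', y', h1', hg'⟩
        have : (↑(↑g : GL (Fin (n+3)) ℂ) : Matrix (Fin (n+3)) (Fin (n+3)) ℂ) a c = 0 := by
          rw [hg', Gmat_x1 n _ _ a c haa hcc, h1']
        rw [this]
        rfl
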